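/- Let σ ∈ ℝ, b > 0, and ω ∈ (−π/2, π/2) satisfy b > σ·sin ω and σ − b·sin ω > 0, and write χ(y) = σ + i·b·sinh(iω + y). Let m ∈ ℝ, C₀ > 0, and let n be an integer with n > m. Suppose ũ is a function defined on the curve L_{σ,b,ω} = χ(ℝ) with |ũ(z)| ≤ C₀·(1 + |z|)^m for all z ∈ L_{σ,b,ω}. Then there exists a constant C > 0 such that for all y ∈ ℝ, |b·cosh(iω + y)·ũ(χ(y))·χ(y)^{−n−1}| ≤ C·e^{(m−n)|y|}. -/

import Mathlib

/-!
Write `χ(y) = (σ - b sin ω cosh y) + i b cos ω sinh y`. With `c = cosh y`, `|χ(y)|² = c² p(1/c)`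
where `p(x) = (σx - b sin ω)² + b² cos² ω (1 - x²)` is positive on `[0, 1]` (as `cos ω > 0` and
`σ > b sin ω`), so by compactness `|χ(y)|` is comparable to `e^{|y|}` from both sides. Since also
`|cosh(iω + y)| ≤ cosh y ≤ e^{|y|}`, every factor is bounded by a constant times a real power of
`e^{|y|}`, and the exponents add up to `1 + m - n - 1`.
-/

/-- The sinh-map `χ_{σ,b,ω}(y) = σ + i·b·sinh(iω + y)`. -/
noncomputable def chi (σ b ω : ℝ) (y : ℂ) : ℂ :=
  (σ : ℂ) + Complex.I * (b : ℂ) * Complex.sinh (Complex.I * (ω : ℂ) + y)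

namespace Complex

lemma norm_sinh_le_cosh_re (z : ℂ) : ‖sinh z‖ ≤ Real.cosh z.re := by
  rw [sinh, Real.cosh_eq, norm_div, RCLike.norm_ofNat]
  gcongr
  refine (norm_sub_le _ _).trans_eq ?_
  rw [norm_exp, norm_exp, neg_re]

lemma norm_cosh_le_cosh_re (z : ℂ) : ‖cosh z‖ ≤ Real.cosh z.re := by
  rw [cosh, Real.cosh_eq, norm_div, RCLike.norm_ofNat]
  gcongr
  refine (norm_add_le _ _).trans_eq ?_
  rw [norm_exp, norm_exp, neg_re]

end Complex

lemma Real.cosh_le_exp_abs (x : ℝ) : Real.cosh x ≤ Real.exp |x| := by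
  rw [← Real.cosh_abs, Real.cosh_eq]
  have : Real.exp (-|x|) ≤ Real.exp |x| := Real.exp_le_exp.2 (neg_le_self (abs_nonneg x))
  linarith

lemma chi_ofReal (σ b ω y : ℝ) :
    chi σ b ω y = ((σ - b * Real.sin ω * Real.cosh y : ℝ) : ℂ)
      + ((b * Real.cos ω * Real.sinh y : ℝ) : ℂ) * Complex.I := by
  rw [chi, add_comm (Complex.I * _), mul_comm Complex.I (ω : ℂ), Complex.sinh_add,
    Complex.sinh_mul_I, Complex.cosh_mul_I]
  push_cast
  linear_combination (b * Complex.sin ω * Complex.cosh y : ℂ) * Complex.I_sq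

lemma norm_chi_le (σ b ω y : ℝ) (hb : 0 ≤ b) :
    ‖chi σ b ω y‖ ≤ (|σ| + b) * Real.exp |y| := by
  have h1 : 1 ≤ Real.exp |y| := Real.one_le_exp (abs_nonneg y)
  calc ‖chi σ b ω y‖ ≤ |σ| + b * Real.cosh y := by
        refine (norm_add_le _ _).trans ?_
        simpa [abs_of_nonneg hb] using
          mul_le_mul_of_nonneg_left (Complex.norm_sinh_le_cosh_re (Complex.I * ω + y)) hb
    _ ≤ |σ| * Real.exp |y| + b * Real.exp |y| := by
        gcongr
        · exact le_mul_of_one_le_right (abs_nonneg σ) h1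
        · exact Real.cosh_le_exp_abs y
    _ = _ := by ring

lemma norm_chi_sq (σ b ω y : ℝ) :
    ‖chi σ b ω y‖ ^ 2
      = (σ - b * Real.sin ω * Real.cosh y) ^ 2 + (b * Real.cos ω) ^ 2 * (Real.cosh y ^ 2 - 1) := by
  rw [chi_ofReal, Complex.norm_add_mul_I, Real.sq_sqrt (by positivity), Real.cosh_sq]
  ring

lemma exists_pos_mul_sq_le {σ s t : ℝ} (ht : t ≠ 0) (hsσ : s < σ) :
    ∃ ε > 0, ∀ c ≥ 1, ε * c ^ 2 ≤ (σ - s * c) ^ 2 + t ^ 2 * (c ^ 2 - 1) := by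
  set p : ℝ → ℝ := fun x ↦ (σ * x - s) ^ 2 + t ^ 2 * (1 - x ^ 2)
  obtain ⟨x₀, hx₀, hmin⟩ := isCompact_Icc.exists_isMinOn (Set.nonempty_Icc.2 zero_le_one)
    (show Continuous p by fun_prop).continuousOn
  have hpos : 0 < p x₀ := by
    rcases hx₀.2.lt_or_eq with _ | rfl
    · exact add_pos_of_nonneg_of_pos (sq_nonneg _) (mul_pos (by positivity) (by nlinarith [hx₀.1]))
    · simp only [p]; nlinarith [sq_pos_of_pos (sub_pos.2 hsσ)]
  refine ⟨p x₀, hpos, fun c hc ↦ ?_⟩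
  have hc0 : 0 < c := by linarith
  have hx : c⁻¹ ∈ Set.Icc (0 : ℝ) 1 := ⟨by positivity, inv_le_one_of_one_le₀ hc⟩
  calc p x₀ * c ^ 2 ≤ p c⁻¹ * c ^ 2 := by gcongr; exact hmin hx
    _ = _ := by simp only [p]; field_simp

lemma exists_pos_mul_exp_abs_le_norm_chi {σ b ω : ℝ} (hb : 0 < b)
    (hω : ω ∈ Set.Ioo (-(Real.pi / 2)) (Real.pi / 2)) (hσ : 0 < σ - b * Real.sin ω) :
    ∃ c > 0, ∀ y : ℝ, c * Real.exp |y| ≤ ‖chi σ b ω y‖ := by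
  have ht : b * Real.cos ω ≠ 0 := (mul_pos hb (Real.cos_pos_of_mem_Ioo hω)).ne'
  obtain ⟨ε, hε, hquad⟩ := exists_pos_mul_sq_le ht (sub_pos.1 hσ)
  refine ⟨√ε / 2, by positivity, fun y ↦ ?_⟩
  have hexp : Real.exp |y| ≤ 2 * Real.cosh y := by
    simpa [Real.cosh_eq, two_mul] using Real.exp_abs_le y
  rw [← pow_le_pow_iff_left₀ (by positivity) (norm_nonneg _) two_ne_zero, norm_chi_sq]
  calc (√ε / 2 * Real.exp |y|) ^ 2 = ε * (Real.exp |y| / 2) ^ 2 := by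
        rw [mul_pow, div_pow, Real.sq_sqrt hε.le]; ring
    _ ≤ ε * Real.cosh y ^ 2 := by gcongr; linarith
    _ ≤ _ := hquad _ (Real.one_le_cosh y)

lemma rpow_le_max_mul_rpow {x E c₁ c₂ : ℝ} (a : ℝ) (hc₁ : 0 < c₁) (hE : 0 < E)
    (hl : c₁ * E ≤ x) (hu : x ≤ c₂ * E) :
    x ^ a ≤ max (c₁ ^ a) (c₂ ^ a) * E ^ a := by
  have hx : 0 < x := (mul_pos hc₁ hE).trans_le hl
  rcases le_total 0 a with ha | ha
  · calc x ^ a ≤ (c₂ * E) ^ a := Real.rpow_le_rpow hx.le hu ha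
      _ = c₂ ^ a * E ^ a := Real.mul_rpow (by nlinarith) hE.le
      _ ≤ _ := by gcongr; exact le_max_right _ _
  · calc x ^ a ≤ (c₁ * E) ^ a := Real.rpow_le_rpow_of_nonpos (by positivity) hl ha
      _ = c₁ ^ a * E ^ a := Real.mul_rpow hc₁.le hE.le
      _ ≤ _ := by gcongr; exact le_max_left _ _

theorem stmt_19_general (σ b ω : ℝ) (hb : 0 < b)
    (hω : ω ∈ Set.Ioo (-(Real.pi / 2)) (Real.pi / 2))
    (h2 : 0 < σ - b * Real.sin ω)
    (m C₀ : ℝ) (hC₀ : 0 < C₀) (n : ℤ) (u : ℂ → ℂ)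
    (hu : ∀ y : ℝ, ‖u (chi σ b ω (y : ℂ))‖
      ≤ C₀ * (1 + ‖chi σ b ω (y : ℂ)‖) ^ m) :
    ∃ C : ℝ, 0 < C ∧ ∀ y : ℝ,
      ‖(b : ℂ) * Complex.cosh (Complex.I * (ω : ℂ) + (y : ℂ)) *
          u (chi σ b ω (y : ℂ)) * (chi σ b ω (y : ℂ)) ^ (-n - 1)‖
        ≤ C * Real.exp ((m - (n : ℝ)) * |y|) := by
  obtain ⟨c, hc, hlow⟩ := exists_pos_mul_exp_abs_le_norm_chi hb hω h2
  set K := 1 + |σ| + b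
  set M₁ := max (c ^ m) (K ^ m)
  set M₂ := max (c ^ (-n - 1 : ℝ)) (K ^ (-n - 1 : ℝ))
  refine ⟨b * C₀ * M₁ * M₂, by positivity, fun y ↦ ?_⟩
  set E := Real.exp |y|
  have hE : 1 ≤ E := Real.one_le_exp (abs_nonneg y)
  have hup := norm_chi_le σ b ω y hb.le
  have hcosh : ‖Complex.cosh (Complex.I * ω + y)‖ ≤ E := by
    refine (Complex.norm_cosh_le_cosh_re _).trans ?_
    simpa using Real.cosh_le_exp_abs y
  have hu' : ‖u (chi σ b ω y)‖ ≤ C₀ * (M₁ * E ^ m) :=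
    (hu y).trans <| by
      gcongr
      exact rpow_le_max_mul_rpow m hc (by positivity) (by linarith [hlow y]) (by linarith)
  have hχ : ‖chi σ b ω y‖ ^ (-n - 1 : ℝ) ≤ M₂ * E ^ (-n - 1 : ℝ) :=
    rpow_le_max_mul_rpow _ hc (by positivity) (hlow y) (by linarith)
  calc _ = b * ‖Complex.cosh (Complex.I * ω + y)‖ * ‖u (chi σ b ω y)‖
        * ‖chi σ b ω y‖ ^ (-n - 1 : ℝ) := by
        rw [norm_mul, norm_mul, norm_mul, norm_zpow, Complex.norm_real, Real.norm_of_nonneg hb.le,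
          ← Real.rpow_intCast]
        push_cast; rfl
    _ ≤ b * E * (C₀ * (M₁ * E ^ m)) * (M₂ * E ^ (-n - 1 : ℝ)) := by gcongr
    _ = b * C₀ * M₁ * M₂ * Real.exp ((m - n) * |y|) := by
        have hexp : E * E ^ m * E ^ (-n - 1 : ℝ) = Real.exp ((m - n) * |y|) := by
          simp only [E, ← Real.exp_mul, ← Real.exp_add]
          ring_nf
        linear_combination b * C₀ * M₁ * M₂ * hexp

/-- exponential decay of the integrand of the sinh-deformed inverse
`Z`-transform: `|b cosh(iω + y) ũ(χ(y)) χ(y)^{−n−1}| ≤ C e^{(m−n)|y|}`. -/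
theorem stmt_19 (σ b ω : ℝ) (hb : 0 < b)
    (hω : ω ∈ Set.Ioo (-(Real.pi / 2)) (Real.pi / 2))
    (h1 : σ * Real.sin ω < b) (h2 : 0 < σ - b * Real.sin ω)
    (m C₀ : ℝ) (hC₀ : 0 < C₀) (n : ℤ) (hn : m < (n : ℝ)) (u : ℂ → ℂ)
    (hu : ∀ y : ℝ, ‖u (chi σ b ω (y : ℂ))‖
      ≤ C₀ * (1 + ‖chi σ b ω (y : ℂ)‖) ^ m) :
    ∃ C : ℝ, 0 < C ∧ ∀ y : ℝ,
      ‖(b : ℂ) * Complex.cosh (Complex.I * (ω : ℂ) + (y : ℂ)) *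
          u (chi σ b ω (y : ℂ)) * (chi σ b ω (y : ℂ)) ^ (-n - 1)‖
        ≤ C * Real.exp ((m - (n : ℝ)) * |y|) :=
  stmt_19_general σ b ω hb hω h2 m C₀ hC₀ n u hu
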